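/- Let Y ⊆ R^m be a nonempty closed convex set, x̄ ∈ R^n, ȳ ∈ S_FO(x̄), and let f be twice continuously differentiable near (x̄, ȳ). Suppose there exists μ > 0 such that ⟨w, ∇²_{yy} f(x̄, ȳ) w⟩ ≥ μ‖w‖² for all w ∈ Y − Y := {y − y' : y, y' ∈ Y}. Then S_FO has a Lipschitz single-valued localization near (x̄, ȳ). -/

import Mathlib

open Set Filter Topology Metric
open scoped RealInnerProductSpace Pointwise BigOperators

noncomputable section

/-- `R^n` as a Euclidean space. -/
abbrev Eu (n : ℕ) := EuclideanSpace ℝ (Fin n)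

/-- The directional neighborhood `V_{ε,δ}(d)` of the origin in direction `d`. -/
def dirNbhd {H : Type*} [NormedAddCommGroup H] [NormedSpace ℝ H] (d : H) (ε δ : ℝ) :
    Set H :=
  {z | z ∈ Metric.ball (0 : H) ε ∧
    (d = 0 ∨ z = 0 ∨ (z ≠ 0 ∧ ‖‖z‖⁻¹ • z - ‖d‖⁻¹ • d‖ ≤ δ))}

/-- The Fréchet (regular) normal cone to `Ω` at `z` (empty if `z ∉ Ω`). -/
def frechetNC {H : Type*} [NormedAddCommGroup H] [InnerProductSpace ℝ H]
    (Ω : Set H) (z : H) : Set H :=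
  {ζ | z ∈ Ω ∧ ∀ ε > 0, ∃ ρ > 0, ∀ z' ∈ Ω, ‖z' - z‖ < ρ → ⟪ζ, z' - z⟫ ≤ ε * ‖z' - z‖}

/-- The limiting (Mordukhovich) normal cone to `Ω` at `z`. -/
def limNC {H : Type*} [NormedAddCommGroup H] [InnerProductSpace ℝ H]
    (Ω : Set H) (z : H) : Set H :=
  {ζ | ∃ zs ζs : ℕ → H, Tendsto zs atTop (𝓝 z) ∧ Tendsto ζs atTop (𝓝 ζ) ∧
    ∀ k, ζs k ∈ frechetNC Ω (zs k)}

/-- The directional limiting normal cone to `Ω` at `z` in direction `d`. -/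
def dirNC {H : Type*} [NormedAddCommGroup H] [InnerProductSpace ℝ H]
    (Ω : Set H) (z d : H) : Set H :=
  {ζ | ∃ (t : ℕ → ℝ) (ds ζs : ℕ → H), (∀ k, 0 < t k) ∧ Tendsto t atTop (𝓝 0) ∧
    Tendsto ds atTop (𝓝 d) ∧ Tendsto ζs atTop (𝓝 ζ) ∧
    ∀ k, ζs k ∈ frechetNC Ω (z + t k • ds k)}

/-- The contingent (tangent) cone to `Ω` at `z`. -/
def tangentC {H : Type*} [NormedAddCommGroup H] [NormedSpace ℝ H]
    (Ω : Set H) (z : H) : Set H :=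
  {d | ∃ (t : ℕ → ℝ) (ds : ℕ → H), (∀ k, 0 < t k) ∧ Tendsto t atTop (𝓝 0) ∧
    Tendsto ds atTop (𝓝 d) ∧ ∀ k, z + t k • ds k ∈ Ω}

/-- The Fréchet normal cone for subsets of a product of inner product spaces,
with the canonical pairing `⟪ζ₁, w₁⟫ + ⟪ζ₂, w₂⟫`. -/
def frechetNCP {H K : Type*} [NormedAddCommGroup H] [InnerProductSpace ℝ H]
    [NormedAddCommGroup K] [InnerProductSpace ℝ K] (Ω : Set (H × K)) (z : H × K) :
    Set (H × K) :=
  {ζ | z ∈ Ω ∧ ∀ ε > 0, ∃ ρ > 0, ∀ z' ∈ Ω, ‖z' - z‖ < ρ →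
    ⟪ζ.1, z'.1 - z.1⟫ + ⟪ζ.2, z'.2 - z.2⟫ ≤ ε * ‖z' - z‖}

/-- The limiting normal cone for subsets of a product of inner product spaces. -/
def limNCP {H K : Type*} [NormedAddCommGroup H] [InnerProductSpace ℝ H]
    [NormedAddCommGroup K] [InnerProductSpace ℝ K] (Ω : Set (H × K)) (z : H × K) :
    Set (H × K) :=
  {ζ | ∃ zs ζs : ℕ → H × K, Tendsto zs atTop (𝓝 z) ∧ Tendsto ζs atTop (𝓝 ζ) ∧
    ∀ k, ζs k ∈ frechetNCP Ω (zs k)}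

/-- The directional limiting normal cone for subsets of a product space. -/
def dirNCP {H K : Type*} [NormedAddCommGroup H] [InnerProductSpace ℝ H]
    [NormedAddCommGroup K] [InnerProductSpace ℝ K] (Ω : Set (H × K)) (z d : H × K) :
    Set (H × K) :=
  {ζ | ∃ (t : ℕ → ℝ) (ds ζs : ℕ → H × K), (∀ k, 0 < t k) ∧ Tendsto t atTop (𝓝 0) ∧
    Tendsto ds atTop (𝓝 d) ∧ Tendsto ζs atTop (𝓝 ζ) ∧
    ∀ k, ζs k ∈ frechetNCP Ω (z + t k • ds k)}

/-- Directional metric subregularity of the set-valued map `Φ` at `(zbar, wbar)`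
in direction `d`. -/
def MetrSubregDir {H K : Type*} [NormedAddCommGroup H] [NormedSpace ℝ H]
    [PseudoMetricSpace K] (Φ : H → Set K) (zbar : H) (wbar : K) (d : H) : Prop :=
  ∃ ε > 0, ∃ δ > 0, ∃ κ > 0, ∀ z : H, z - zbar ∈ dirNbhd d ε δ →
    Metric.infDist z {z' | wbar ∈ Φ z'} ≤ κ * Metric.infDist wbar (Φ z)

/-- The lower-level solution map `S(x) = argmin_{y ∈ Y} f(x,y)`. -/
def Ssol {n m : ℕ} (Y : Set (EuclideanSpace ℝ (Fin m)))
    (f : EuclideanSpace ℝ (Fin n) → EuclideanSpace ℝ (Fin m) → ℝ)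
    (x : EuclideanSpace ℝ (Fin n)) : Set (EuclideanSpace ℝ (Fin m)) :=
  {y | y ∈ Y ∧ ∀ y' ∈ Y, f x y ≤ f x y'}

/-- The partial gradient `∇_y f(x,y)`. -/
def gradY {n m : ℕ} (f : EuclideanSpace ℝ (Fin n) → EuclideanSpace ℝ (Fin m) → ℝ)
    (x : EuclideanSpace ℝ (Fin n)) (y : EuclideanSpace ℝ (Fin m)) :
    EuclideanSpace ℝ (Fin m) :=
  gradient (f x) y

/-- The partial gradient `∇_x f(x,y)`. -/
def gradX {n m : ℕ} (f : EuclideanSpace ℝ (Fin n) → EuclideanSpace ℝ (Fin m) → ℝ)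
    (x : EuclideanSpace ℝ (Fin n)) (y : EuclideanSpace ℝ (Fin m)) :
    EuclideanSpace ℝ (Fin n) :=
  gradient (fun x' => f x' y) x

/-- The first-order (stationary) solution map
`S_FO(x) = {y ∈ Y : 0 ∈ ∇_y f(x,y) + N̂_Y(y)}`. -/
def SFO {n m : ℕ} (Y : Set (EuclideanSpace ℝ (Fin m)))
    (f : EuclideanSpace ℝ (Fin n) → EuclideanSpace ℝ (Fin m) → ℝ)
    (x : EuclideanSpace ℝ (Fin n)) : Set (EuclideanSpace ℝ (Fin m)) :=
  {y | y ∈ Y ∧ -gradY f x y ∈ frechetNC Y y}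

/-- The graph of the Fréchet normal cone map `y ⇉ N̂_Y(y)`. -/
def gphN {m : ℕ} (Y : Set (EuclideanSpace ℝ (Fin m))) :
    Set (EuclideanSpace ℝ (Fin m) × EuclideanSpace ℝ (Fin m)) :=
  {p | p.2 ∈ frechetNC Y p.1}

/-- `S` has a Lipschitz single-valued localization near `(xbar, ybar)`. -/
def HasLipLoc {n m : ℕ} (S : EuclideanSpace ℝ (Fin n) → Set (EuclideanSpace ℝ (Fin m)))
    (xbar : EuclideanSpace ℝ (Fin n)) (ybar : EuclideanSpace ℝ (Fin m)) : Prop :=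
  ∃ (U : Set (EuclideanSpace ℝ (Fin n))) (V : Set (EuclideanSpace ℝ (Fin m)))
    (s : EuclideanSpace ℝ (Fin n) → EuclideanSpace ℝ (Fin m)) (L : NNReal),
      IsOpen U ∧ xbar ∈ U ∧ IsOpen V ∧ ybar ∈ V ∧ LipschitzOnWith L s U ∧
      (∀ x ∈ U, s x ∈ V) ∧ ∀ x ∈ U, S x ∩ V = {s x}

/-- The inf-compactness condition at `xbar` relative to `ybar ∈ S(xbar)`. -/
def InfCompact {n m : ℕ} (Y : Set (EuclideanSpace ℝ (Fin m)))
    (f : EuclideanSpace ℝ (Fin n) → EuclideanSpace ℝ (Fin m) → ℝ)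
    (xbar : EuclideanSpace ℝ (Fin n)) (ybar : EuclideanSpace ℝ (Fin m)) : Prop :=
  ∃ (C : Set (EuclideanSpace ℝ (Fin m))) (α : ℝ) (U : Set (EuclideanSpace ℝ (Fin n))),
    IsCompact C ∧ f xbar ybar < α ∧ U ∈ 𝓝 xbar ∧
    (∀ x ∈ U, {y | y ∈ Y ∧ f x y ≤ α} ⊆ C) ∧ ∀ x ∈ U, (Ssol Y f x).Nonempty


/-!
Write `G (x, y) = ∇_y f(x, y)`. Since `G` is strictly differentiable at `(x̄, ȳ)`, near that
point `G (x, ·)` is strongly monotone with modulus `μ / 2` on `K = Y ∩ closedBall ȳ r` and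
`G (·, y)` is Lipschitz. A minimiser of `f x` over the compact convex set `K` is stationary over
`K`, and strong monotonicity puts stationary points at parameters `x, x'` within a multiple of
`‖x - x'‖` of each other. Hence they stay in the open ball, where stationarity over `K` and over
`Y` agree.
-/
section FrechetNormalCone

variable {H : Type*} [NormedAddCommGroup H] [InnerProductSpace ℝ H] {K Y U : Set H} {y w ζ : H}

theorem mem_frechetNC_of_forall_inner_nonpos (hy : y ∈ K) (h : ∀ w ∈ K, ⟪ζ, w - y⟫ ≤ 0) :
    ζ ∈ frechetNC K y :=
  ⟨hy, fun _ hε => ⟨1, one_pos, fun w hw _ => (h w hw).trans (by positivity)⟩⟩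

theorem Convex.inner_nonpos_of_mem_frechetNC (hK : Convex ℝ K) (hζ : ζ ∈ frechetNC K y)
    (hw : w ∈ K) : ⟪ζ, w - y⟫ ≤ 0 := by
  obtain ⟨hy, hζ⟩ := hζ
  have hsmall : ∀ ε > 0, ⟪ζ, w - y⟫ ≤ ε * ‖w - y‖ := by
    intro ε hε
    obtain ⟨ρ, hρ, hρζ⟩ := hζ ε hε
    have hlim : Tendsto (fun t : ℝ => ‖t • (w - y)‖) (𝓝[>] 0) (𝓝 0) := by
      simpa using ((continuous_id.smul continuous_const).norm.tendsto' (0 : ℝ) 0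
        (by simp)).mono_left nhdsWithin_le_nhds
    obtain ⟨t, ⟨htρ, ht1⟩, ht0⟩ := ((hlim.eventually (gt_mem_nhds hρ)).and
      (Ioc_mem_nhdsGT one_pos)).and self_mem_nhdsWithin |>.exists
    have hmem : y + t • (w - y) ∈ K := hK.add_smul_sub_mem hy hw ⟨le_of_lt ht0, ht1.2⟩
    have := hρζ _ hmem (by simpa using htρ)
    simp only [add_sub_cancel_left, real_inner_smul_right, norm_smul, Real.norm_eq_abs,
      abs_of_pos ht0] at this
    nlinarith
  refine ge_of_tendsto (f := fun ε : ℝ => ε * ‖w - y‖) (x := 𝓝[>] 0) ?_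
    (eventually_mem_nhdsWithin.mono hsmall)
  exact ((continuous_mul_const ‖w - y‖).tendsto' 0 0 (zero_mul _)).mono_left nhdsWithin_le_nhds

theorem frechetNC_subset_of_subset (hKY : K ⊆ Y) (hy : y ∈ K) :
    frechetNC Y y ⊆ frechetNC K y := fun _ ⟨_, hζ⟩ =>
  ⟨hy, fun ε hε => (hζ ε hε).imp fun _ ⟨hρ, h⟩ => ⟨hρ, fun w hw => h w (hKY hw)⟩⟩

theorem frechetNC_inter_subset (hU : U ∈ 𝓝 y) : frechetNC (Y ∩ U) y ⊆ frechetNC Y y := by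
  rintro ζ ⟨hy, hζ⟩
  obtain ⟨ρU, hρU, hballU⟩ := Metric.mem_nhds_iff.mp hU
  refine ⟨hy.1, fun ε hε => ?_⟩
  obtain ⟨ρ, hρ, h⟩ := hζ ε hε
  refine ⟨min ρ ρU, lt_min hρ hρU, fun w hw hwy =>
    h w ⟨hw, hballU ?_⟩ (hwy.trans_le (min_le_left _ _))⟩
  rw [Metric.mem_ball, dist_eq_norm]
  exact hwy.trans_le (min_le_right _ _)

end FrechetNormalCone

section VariationalInequality

variable {H : Type*} [NormedAddCommGroup H] [InnerProductSpace ℝ H] {K : Set H}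

theorem IsMinOn.neg_gradient_mem_frechetNC [CompleteSpace H] {φ : H → ℝ} {y : H}
    (hK : Convex ℝ K) (hmin : IsMinOn φ K y) (hy : y ∈ K) (hφ : DifferentiableAt ℝ φ y) :
    -gradient φ y ∈ frechetNC K y := by
  refine mem_frechetNC_of_forall_inner_nonpos hy fun w hw => ?_
  have := hmin.localize.hasFDerivWithinAt_nonneg
    hφ.hasGradientAt.hasFDerivAt.hasFDerivWithinAt
    (sub_mem_posTangentConeAt_of_segment_subset (hK.segment_subset hy hw))
  simpa [InnerProductSpace.toDual_apply_apply, inner_neg_left] using this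

theorem IsCompact.exists_neg_gradient_mem_frechetNC [CompleteSpace H] {φ : H → ℝ}
    (hKc : IsCompact K) (hK : Convex ℝ K) (hne : K.Nonempty)
    (hφ : ∀ y ∈ K, DifferentiableAt ℝ φ y) : ∃ y, -gradient φ y ∈ frechetNC K y := by
  obtain ⟨y, hy, hmin⟩ :=
    hKc.exists_isMinOn hne fun y hy => (hφ y hy).continuousAt.continuousWithinAt
  exact ⟨y, hmin.neg_gradient_mem_frechetNC hK hy (hφ y hy)⟩

/-- Read `g = G x y`, `g' = G x' y'` and `h = G x y'` for an operator `G` depending on a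
parameter `x`. -/
theorem Convex.mul_norm_sub_le_of_neg_mem_frechetNC (hK : Convex ℝ K) {y y' g g' h : H}
    {α c : ℝ} (hy : -g ∈ frechetNC K y) (hy' : -g' ∈ frechetNC K y')
    (hmono : α * ‖y - y'‖ ^ 2 ≤ ⟪g - h, y - y'⟫) (hh : ‖h - g'‖ ≤ c) :
    α * ‖y - y'‖ ≤ c := by
  have h₁ := hK.inner_nonpos_of_mem_frechetNC hy hy'.1
  have h₂ := hK.inner_nonpos_of_mem_frechetNC hy' hy.1
  have hsplit : ⟪g - h, y - y'⟫ = ⟪-g, y' - y⟫ + ⟪-g', y - y'⟫ + ⟪h - g', y' - y⟫ := by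
    simp only [inner_sub_left, inner_sub_right, inner_neg_left]; ring
  have hdev : ⟪h - g', y' - y⟫ ≤ c * ‖y - y'‖ :=
    (real_inner_le_norm _ _).trans (by rw [norm_sub_rev y']; gcongr)
  rcases (norm_nonneg (y - y')).eq_or_lt with h0 | hpos
  · rw [← h0, mul_zero]; exact (norm_nonneg _).trans hh
  · nlinarith

end VariationalInequality

theorem HasFDerivAt.comp_prodMk_right {E F G : Type*} [NormedAddCommGroup E] [NormedSpace ℝ E]
    [NormedAddCommGroup F] [NormedSpace ℝ F] [NormedAddCommGroup G] [NormedSpace ℝ G]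
    {g : E × F → G} {g' : E × F →L[ℝ] G} {x : E} {y : F} (hg : HasFDerivAt g g' (x, y)) :
    HasFDerivAt (fun y' => g (x, y')) (g'.comp (ContinuousLinearMap.inr ℝ E F)) y :=
  hg.comp y (hasFDerivAt_prodMk_right x y)

section PartialGradient

variable {n m : ℕ} {f : Eu n → Eu m → ℝ} {x : Eu n} {y : Eu m}

theorem gradY_eq_of_differentiableAt
    (hf : DifferentiableAt ℝ (fun q : Eu n × Eu m => f q.1 q.2) (x, y)) :
    gradY f x y = (InnerProductSpace.toDual ℝ (Eu m)).symm
      ((fderiv ℝ (fun q : Eu n × Eu m => f q.1 q.2) (x, y)).comp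
        (ContinuousLinearMap.inr ℝ (Eu n) (Eu m))) := by
  rw [gradY, gradient, hf.hasFDerivAt.comp_prodMk_right.fderiv]

theorem contDiffAt_gradY (hf : ContDiffAt ℝ 2 (fun q : Eu n × Eu m => f q.1 q.2) (x, y)) :
    ContDiffAt ℝ 1 (fun q : Eu n × Eu m => gradY f q.1 q.2) (x, y) := by
  have hdual : ContDiff ℝ 1 (InnerProductSpace.toDual ℝ (Eu m)).symm :=
    (InnerProductSpace.toDual ℝ (Eu m)).symm.toContinuousLinearEquiv.contDiff
  refine (hdual.contDiffAt.comp _ ((hf.fderiv_right (by norm_num)).clm_comp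
    (contDiffAt_const (c := ContinuousLinearMap.inr ℝ (Eu n) (Eu m))))).congr_of_eventuallyEq ?_
  filter_upwards [hf.eventually (by simp)] with q hq
  exact gradY_eq_of_differentiableAt (hq.differentiableAt (by norm_num))

end PartialGradient

namespace ApproximatesLinearOn

variable {F E : Type*} [NormedAddCommGroup F] [NormedSpace ℝ F] [NormedAddCommGroup E]
  [InnerProductSpace ℝ E] {G : F × E → E} {G' : F × E →L[ℝ] E} {s : Set (F × E)} {c : NNReal}

theorem sub_mul_norm_sq_le_inner (hG : ApproximatesLinearOn G G' s c) {μ : ℝ} {x : F}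
    {y y' : E} (hy : (x, y) ∈ s) (hy' : (x, y') ∈ s)
    (hμ : μ * ‖y - y'‖ ^ 2 ≤ ⟪y - y', G' (0, y - y')⟫) :
    (μ - c) * ‖y - y'‖ ^ 2 ≤ ⟪G (x, y) - G (x, y'), y - y'⟫ := by
  have happrox := hG _ hy _ hy'
  simp only [Prod.mk_sub_mk, sub_self, Prod.norm_def, norm_zero, norm_nonneg, sup_of_le_right]
    at happrox
  have herr := neg_le_of_abs_le
    (abs_real_inner_le_norm (G (x, y) - G (x, y') - G' (0, y - y')) (y - y'))
  rw [show G (x, y) - G (x, y') = G' (0, y - y') + (G (x, y) - G (x, y') - G' (0, y - y')) by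
    abel, inner_add_left]
  rw [real_inner_comm] at hμ
  nlinarith [mul_le_mul_of_nonneg_right happrox (norm_nonneg (y - y'))]

theorem norm_sub_le_mul_norm_fst_sub (hG : ApproximatesLinearOn G G' s c) {x x' : F} {y : E}
    (hx : (x, y) ∈ s) (hx' : (x', y) ∈ s) :
    ‖G (x, y) - G (x', y)‖ ≤ (‖G'‖ + c) * ‖x - x'‖ := by
  simpa [dist_eq_norm, Prod.dist_eq, Subtype.dist_eq] using
    hG.lipschitz.dist_le_mul ⟨_, hx⟩ ⟨_, hx'⟩

end ApproximatesLinearOn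

theorem hasLipLoc_of_stronglyMonotone {n m : ℕ} {Y : Set (Eu m)} (hY : Convex ℝ Y)
    (G : Eu n → Eu m → Eu m) {a : Eu n} {b : Eu m} (hb : -G a b ∈ frechetNC Y b)
    {r δ α L : ℝ} (hr : 0 < r) (hδ : 0 < δ) (hα : 0 < α) (hL : 0 ≤ L)
    (hmono : ∀ x ∈ ball a δ, ∀ y ∈ Y ∩ closedBall b r, ∀ y' ∈ Y ∩ closedBall b r,
      α * ‖y - y'‖ ^ 2 ≤ ⟪G x y - G x y', y - y'⟫)
    (hlip : ∀ x ∈ ball a δ, ∀ x' ∈ ball a δ, ∀ y ∈ closedBall b r,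
      ‖G x y - G x' y‖ ≤ L * ‖x - x'‖)
    (hex : ∀ x ∈ ball a δ, ∃ y, -G x y ∈ frechetNC (Y ∩ closedBall b r) y) :
    HasLipLoc (fun x => {y | y ∈ Y ∧ -G x y ∈ frechetNC Y y}) a b := by
  set K := Y ∩ closedBall b r
  have hK : Convex ℝ K := hY.inter (convex_closedBall b r)
  have hclose : ∀ x ∈ ball a δ, ∀ x' ∈ ball a δ, ∀ y y', -G x y ∈ frechetNC K y →
      -G x' y' ∈ frechetNC K y' → α * ‖y - y'‖ ≤ L * ‖x - x'‖ :=
    fun x hx x' hx' y y' hy hy' => hK.mul_norm_sub_le_of_neg_mem_frechetNC hy hy'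
      (hmono x hx y hy.1 y' hy'.1) (hlip x hx x' hx' y' hy'.1.2)
  choose! s hs using hex
  have hbK : b ∈ K := ⟨hb.1, mem_closedBall_self hr.le⟩
  -- `δ'` keeps `(L / α) * ‖x - a‖ < r`, so the selection stays in the open ball `ball b r`.
  set δ' := min δ (α * r / (L + α))
  have hU : ball a δ' ⊆ ball a δ := ball_subset_ball (min_le_left _ _)
  have hsV : ∀ x ∈ ball a δ', s x ∈ ball b r := by
    intro x hx
    have hsb := hclose x (hU hx) a (mem_ball_self hδ) _ _ (hs x (hU hx))
      (frechetNC_subset_of_subset inter_subset_left hbK hb)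
    have hxa : ‖x - a‖ * (L + α) < α * r := by
      rw [← lt_div_iff₀ (by positivity)]
      exact (mem_ball_iff_norm.mp hx).trans_le (min_le_right _ _)
    rw [mem_ball_iff_norm]
    nlinarith [norm_nonneg (x - a)]
  refine ⟨ball a δ', ball b r, s, Real.toNNReal (L / α), isOpen_ball,
    mem_ball_self (lt_min hδ (by positivity)), isOpen_ball, mem_ball_self hr, ?_, hsV, ?_⟩
  · refine LipschitzOnWith.of_dist_le' fun x hx x' hx' => ?_
    rw [dist_eq_norm, dist_eq_norm, div_mul_eq_mul_div, le_div_iff₀ hα, mul_comm]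
    exact hclose x (hU hx) x' (hU hx') _ _ (hs x (hU hx)) (hs x' (hU hx'))
  · intro x hx
    ext y
    constructor
    · rintro ⟨⟨hyY, hyN⟩, hyV⟩
      have hyK : y ∈ K := ⟨hyY, ball_subset_closedBall hyV⟩
      have hys := hclose x (hU hx) x (hU hx) y (s x)
        (frechetNC_subset_of_subset inter_subset_left hyK hyN) (hs x (hU hx))
      rw [sub_self, norm_zero, mul_zero] at hys
      have : ‖y - s x‖ ≤ 0 := by nlinarith [norm_nonneg (y - s x)]
      exact sub_eq_zero.mp (norm_le_zero_iff.mp this)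
    · rintro rfl
      have hball : closedBall b r ∈ 𝓝 (s x) :=
        mem_of_superset (isOpen_ball.mem_nhds (hsV x hx)) ball_subset_closedBall
      exact ⟨⟨(hs x (hU hx)).1.1, frechetNC_inter_subset hball (hs x (hU hx))⟩, hsV x hx⟩

theorem stmt3_general {n m : ℕ} (Y : Set (Eu m)) (hYcl : IsClosed Y)
    (hYcv : Convex ℝ Y) (f : Eu n → Eu m → ℝ) (xbar : Eu n) (ybar : Eu m)
    (hybar : ybar ∈ SFO Y f xbar)
    (hf : ContDiffAt ℝ 2 (fun p : Eu n × Eu m => f p.1 p.2) (xbar, ybar))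
    (μ : ℝ) (hμ : 0 < μ)
    (hmono : ∀ y ∈ Y, ∀ y' ∈ Y,
      μ * ‖y - y'‖ ^ 2 ≤ ⟪y - y', fderiv ℝ (fun y'' => gradY f xbar y'') ybar (y - y')⟫) :
    HasLipLoc (SFO Y f) xbar ybar := by
  have hG := (contDiffAt_gradY hf).hasStrictFDerivAt one_ne_zero
  set G' := fderiv ℝ (fun q : Eu n × Eu m => gradY f q.1 q.2) (xbar, ybar)
  have hD : fderiv ℝ (fun y => gradY f xbar y) ybar = G'.comp (ContinuousLinearMap.inr ℝ _ _) :=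
    hG.hasFDerivAt.comp_prodMk_right.fderiv
  set c : NNReal := ⟨μ / 2, (half_pos hμ).le⟩
  obtain ⟨s, hs, hGs⟩ :=
    hG.approximates_deriv_on_nhds (c := c) (Or.inr (NNReal.coe_pos.mp (half_pos hμ)))
  obtain ⟨ρ, hρ, hball⟩ := Metric.mem_nhds_iff.mp (inter_mem hs (hf.eventually (by simp)))
  have hmem {x y} (hx : x ∈ ball xbar (ρ / 2)) (hy : y ∈ closedBall ybar (ρ / 2)) :
      (x, y) ∈ s ∧ DifferentiableAt ℝ (f x) y := by
    have hxy : (x, y) ∈ ball (xbar, ybar) ρ := by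
      rw [← ball_prod_same]
      exact ⟨ball_subset_ball (by linarith) hx, closedBall_subset_ball (by linarith) hy⟩
    obtain ⟨hxys, hxyF : ContDiffAt ℝ 2 (fun p : Eu n × Eu m => f p.1 p.2) (x, y)⟩ := hball hxy
    exact ⟨hxys, (hxyF.differentiableAt two_ne_zero).hasFDerivAt.comp_prodMk_right.differentiableAt⟩
  have hK := (isCompact_closedBall ybar (ρ / 2)).inter_left hYcl
  refine hasLipLoc_of_stronglyMonotone hYcv (gradY f) hybar.2 (half_pos hρ) (half_pos hρ)
    (half_pos hμ) (L := ‖G'‖ + c) (by positivity) ?_ ?_ ?_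
  · intro x hx y hy y' hy'
    have := hGs.sub_mul_norm_sq_le_inner (hmem hx hy.2).1 (hmem hx hy'.2).1
      (by simpa [hD] using hmono y hy.1 y' hy'.1)
    rwa [show μ - (c : ℝ) = μ / 2 from sub_half μ] at this
  · exact fun x hx x' hx' y hy => hGs.norm_sub_le_mul_norm_fst_sub (hmem hx hy).1 (hmem hx' hy).1
  · exact fun x hx => hK.exists_neg_gradient_mem_frechetNC (hYcv.inter (convex_closedBall _ _))
      ⟨ybar, hybar.1, mem_closedBall_self (half_pos hρ).le⟩ fun y hy => (hmem hx hy.2).2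

/-- localization of `S_FO` under strong monotonicity of the Hessian
over `Y - Y` for a closed convex set `Y`. -/
theorem stmt3 {n m : ℕ} (Y : Set (Eu m)) (hYne : Y.Nonempty) (hYcl : IsClosed Y)
    (hYcv : Convex ℝ Y) (f : Eu n → Eu m → ℝ) (xbar : Eu n) (ybar : Eu m)
    (hybar : ybar ∈ SFO Y f xbar)
    (hf : ContDiffAt ℝ 2 (fun p : Eu n × Eu m => f p.1 p.2) (xbar, ybar))
    (μ : ℝ) (hμ : 0 < μ)
    (hmono : ∀ y ∈ Y, ∀ y' ∈ Y,
      μ * ‖y - y'‖ ^ 2 ≤ ⟪y - y', fderiv ℝ (fun y'' => gradY f xbar y'') ybar (y - y')⟫) :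
    HasLipLoc (SFO Y f) xbar ybar :=
  stmt3_general Y hYcl hYcv f xbar ybar hybar hf μ hμ hmono
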